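/- Let u : ℝ → ℝ be (r+1)-times continuously differentiable on an interval containing x̃ and the points x̃ + z_i for i = 1,...,d, with |z_i| ≤ h. Suppose the weights a_i satisfy the moment conditions ∑_i z_i^{s-1} a_i = δ_{1s} for s = 1,...,r. Then |∑_{i=1}^d (u(x̃+z_i)-u(x̃))/z_i · a_i − u'(x̃)| ≤ M h^r ∑_i |a_i| / (r+1)!, where M is a bound on |u^{(r+1)}| on the interval. -/

import Mathlib

open Set Finset

private lemma my_ideriv_within_eq {u : ℝ → ℝ} {n : ℕ} (hu : ContDiff ℝ (n : ℕ∞) u)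
    {m : ℕ} (hm : m ≤ n) {s : Set ℝ} (hs : UniqueDiffOn ℝ s) {x : ℝ} (hx : x ∈ s) :
    iteratedDerivWithin m u s x = iteratedDeriv m u x := by
  have h1 : HasFTaylorSeriesUpTo (n : ℕ∞) u (ftaylorSeries ℝ u) :=
    contDiff_iff_ftaylorSeries.mp hu
  have h2 : HasFTaylorSeriesUpToOn (n : ℕ∞) u (ftaylorSeries ℝ u) s :=
    (hasFTaylorSeriesUpToOn_univ_iff.mpr h1).mono (subset_univ s)
  have h3 : ftaylorSeries ℝ u x m = iteratedFDerivWithin ℝ m u s x :=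
    h2.eq_iteratedFDerivWithin_of_uniqueDiffOn (by exact_mod_cast hm) hs hx
  rw [iteratedDerivWithin_eq_iteratedFDerivWithin, iteratedDeriv_eq_iteratedFDeriv, ← h3]
  rfl

/-- Taylor's theorem with Lagrange remainder bound, valid on both sides of the center. -/
private lemma my_taylor_bound {u : ℝ → ℝ} {r : ℕ} (hu : ContDiff ℝ ((r : ℕ∞) + 1) u)
    {x₀ x M : ℝ} (hxx : x ≠ x₀)
    (hM : ∀ t ∈ Set.uIcc x₀ x, |iteratedDeriv (r + 1) u t| ≤ M) :
    |u x - ∑ k ∈ Finset.range (r + 1), iteratedDeriv k u x₀ * (x - x₀) ^ k / k.factorial|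
      ≤ M * |x - x₀| ^ (r + 1) / (r + 1).factorial := by
  have hu' : ContDiff ℝ (((r + 1 : ℕ) : ℕ∞)) u := by exact_mod_cast hu
  rcases lt_or_gt_of_ne hxx with hlt | hgt
  · -- x < x₀ : reflect
    set v : ℝ → ℝ := fun t => u (-t) with hv
    have hv' : ContDiff ℝ (((r + 1 : ℕ) : ℕ∞)) v := hu'.comp contDiff_neg
    have hltn : -x₀ < -x := by linarith
    have hcd : ContDiffOn ℝ (r : ℕ∞) v (Icc (-x₀) (-x)) :=
      (hv'.of_le (by exact_mod_cast Nat.le_succ r)).contDiffOn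
    have hdiff : DifferentiableOn ℝ (iteratedDerivWithin r v (Icc (-x₀) (-x)))
        (Ioo (-x₀) (-x)) := by
      apply DifferentiableOn.congr
          (f := iteratedDeriv r v)
      · exact ((hv'.differentiable_iteratedDeriv r
          (by exact_mod_cast Nat.lt_succ_self r)).differentiableOn)
      · intro y hy
        exact my_ideriv_within_eq hv' (Nat.le_succ r) (uniqueDiffOn_Icc hltn)
          (Ioo_subset_Icc_self hy)
    obtain ⟨x', hx', hrem⟩ := taylor_mean_remainder_lagrange (n := r) hltn.ne
      (by rwa [uIcc_of_le hltn.le]) (by rwa [uIcc_of_le hltn.le, uIoo_of_le hltn.le])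
    rw [uIoo_of_le hltn.le] at hx'
    rw [uIcc_of_le hltn.le] at hrem
    have hder : ∀ (k : ℕ) (t : ℝ), iteratedDeriv k v t = (-1 : ℝ) ^ k * iteratedDeriv k u (-t) := by
      intro k t
      simpa [smul_eq_mul] using iteratedDeriv_comp_neg k u t
    have htay : taylorWithinEval v r (Icc (-x₀) (-x)) (-x₀) (-x)
        = ∑ k ∈ Finset.range (r + 1), iteratedDeriv k u x₀ * (x - x₀) ^ k / k.factorial := by
      rw [taylor_within_apply]
      apply Finset.sum_congr rfl
      intro k hk
      rw [my_ideriv_within_eq hv'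
        (le_trans (Finset.mem_range_succ_iff.mp hk) (Nat.le_succ r))
        (uniqueDiffOn_Icc hltn) (left_mem_Icc.mpr hltn.le), hder]
      simp only [smul_eq_mul, neg_neg]
      rw [show (-x - -x₀ : ℝ) = -(x - x₀) by ring, neg_pow]
      have h1 : ((-1 : ℝ)) ^ k * (-1) ^ k = 1 := by
        rw [← pow_add, Even.neg_one_pow ⟨k, rfl⟩]
      linear_combination ((k.factorial : ℝ))⁻¹ * (x - x₀) ^ k * iteratedDeriv k u x₀ * h1
    have hrem' : iteratedDerivWithin (r + 1) v (Icc (-x₀) (-x)) x'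
        = (-1 : ℝ) ^ (r + 1) * iteratedDeriv (r + 1) u (-x') := by
      rw [my_ideriv_within_eq hv' le_rfl (uniqueDiffOn_Icc hltn) (Ioo_subset_Icc_self hx'),
        hder]
    have hvx : v (-x) = u x := by simp [hv]
    have hmem : -x' ∈ Set.uIcc x₀ x := by
      rcases hx' with ⟨h1, h2⟩
      rw [Set.uIcc_of_ge hlt.le]
      constructor <;> linarith
    have hbound := hM (-x') hmem
    rw [← hvx, ← htay, hrem, hrem']
    rw [abs_div, abs_mul, abs_mul, abs_pow, abs_neg, abs_one, one_pow, one_mul, abs_pow]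
    rw [show |(-x - -x₀ : ℝ)| = |x - x₀| by rw [abs_sub_comm]; congr 1; ring]
    rw [Nat.abs_cast]
    gcongr
  · -- x₀ < x
    have hcd : ContDiffOn ℝ (r : ℕ∞) u (Icc x₀ x) :=
      (hu'.of_le (by exact_mod_cast Nat.le_succ r)).contDiffOn
    have hdiff : DifferentiableOn ℝ (iteratedDerivWithin r u (Icc x₀ x)) (Ioo x₀ x) := by
      apply DifferentiableOn.congr (f := iteratedDeriv r u)
      · exact ((hu'.differentiable_iteratedDeriv r
          (by exact_mod_cast Nat.lt_succ_self r)).differentiableOn)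
      · intro y hy
        exact my_ideriv_within_eq hu' (Nat.le_succ r) (uniqueDiffOn_Icc hgt)
          (Ioo_subset_Icc_self hy)
    obtain ⟨x', hx', hrem⟩ := taylor_mean_remainder_lagrange (n := r) hgt.ne
      (by rwa [uIcc_of_le hgt.le]) (by rwa [uIcc_of_le hgt.le, uIoo_of_le hgt.le])
    rw [uIoo_of_le hgt.le] at hx'
    rw [uIcc_of_le hgt.le] at hrem
    have htay : taylorWithinEval u r (Icc x₀ x) x₀ x
        = ∑ k ∈ Finset.range (r + 1), iteratedDeriv k u x₀ * (x - x₀) ^ k / k.factorial := by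
      rw [taylor_within_apply]
      apply Finset.sum_congr rfl
      intro k hk
      rw [my_ideriv_within_eq hu'
        (le_trans (Finset.mem_range_succ_iff.mp hk) (Nat.le_succ r))
        (uniqueDiffOn_Icc hgt) (left_mem_Icc.mpr hgt.le)]
      simp only [smul_eq_mul]
      field_simp
    have hrem' : iteratedDerivWithin (r + 1) u (Icc x₀ x) x' = iteratedDeriv (r + 1) u x' :=
      my_ideriv_within_eq hu' le_rfl (uniqueDiffOn_Icc hgt) (Ioo_subset_Icc_self hx')
    have hmem : x' ∈ Set.uIcc x₀ x := by
      rw [Set.uIcc_of_le hgt.le]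
      exact Ioo_subset_Icc_self hx'
    have hbound := hM x' hmem
    rw [← htay, hrem, hrem']
    rw [abs_div, abs_mul, abs_pow, Nat.abs_cast]
    gcongr

/-- Error bound for the non-local first derivative with an `r`-th order accurate
local stencil: if `u` is `(r+1)`-times continuously differentiable, the stencil
offsets satisfy `0 < |z_i| ≤ h`, the weights satisfy the moment conditions
`∑_i z_i^(s-1) a_i = δ_{1s}` for `s = 1, ..., r`, and `M` bounds `|u^{(r+1)}|` on
`[x₀ - h, x₀ + h]`, then
`|∑_i (u(x₀+z_i)-u(x₀))/z_i · a_i − u'(x₀)| ≤ M h^r (∑_i |a_i|) / (r+1)!`. -/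
theorem nonlocal_derivative_error_bound
    (r d : ℕ) (hr : 1 ≤ r) (u : ℝ → ℝ) (x₀ h M : ℝ) (hh : 0 < h)
    (hu : ContDiff ℝ (r + 1) u)
    (hM : ∀ t ∈ Set.Icc (x₀ - h) (x₀ + h), |iteratedDeriv (r + 1) u t| ≤ M)
    (z : Fin d → ℝ) (hz0 : ∀ i, z i ≠ 0) (hzh : ∀ i, |z i| ≤ h)
    (a : Fin d → ℝ)
    (ha : ∀ s ∈ Finset.Icc 1 r, ∑ i, z i ^ (s - 1) * a i = if s = 1 then 1 else 0) :
    |(∑ i, (u (x₀ + z i) - u x₀) / z i * a i) - deriv u x₀|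
      ≤ M * h ^ r * (∑ i, |a i|) / (r + 1).factorial := by
  -- Error term for each stencil point
  set E : Fin d → ℝ := fun i =>
    u (x₀ + z i) - ∑ k ∈ Finset.range (r + 1), iteratedDeriv k u x₀ * (z i) ^ k / k.factorial
    with hE
  have hEbound : ∀ i, |E i| ≤ M * |z i| ^ (r + 1) / (r + 1).factorial := by
    intro i
    have hne : (x₀ + z i : ℝ) ≠ x₀ := by
      intro hc; apply hz0 i; linarith [hc]
    have hsub : Set.uIcc x₀ (x₀ + z i) ⊆ Set.Icc (x₀ - h) (x₀ + h) := by
      apply Set.uIcc_subset_Icc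
      · constructor <;> linarith
      · have h1 := (abs_le.mp (hzh i)).1
        have h2 := (abs_le.mp (hzh i)).2
        constructor <;> linarith
    have := my_taylor_bound (r := r) hu hne (fun t ht => hM t (hsub ht))
    simpa [hE, add_sub_cancel_left] using this
  -- Taylor polynomial part
  have hzsum : ∀ i, (u (x₀ + z i) - u x₀) / z i
      = (∑ k ∈ Finset.Icc 1 r, iteratedDeriv k u x₀ * (z i) ^ (k - 1) / k.factorial)
        + E i / z i := by
    intro i
    have hz := hz0 i
    have hsplit : ∑ k ∈ Finset.range (r + 1), iteratedDeriv k u x₀ * (z i) ^ k / k.factorial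
        = u x₀ + ∑ k ∈ Finset.Icc 1 r, iteratedDeriv k u x₀ * (z i) ^ k / k.factorial := by
      rw [Finset.range_eq_Ico, Finset.sum_eq_sum_Ico_succ_bot (by omega : 0 < r + 1),
        Finset.Ico_add_one_right_eq_Icc]
      simp
    have hEi : u (x₀ + z i) = u x₀
        + (∑ k ∈ Finset.Icc 1 r, iteratedDeriv k u x₀ * (z i) ^ k / k.factorial) + E i := by
      simp only [hE]
      rw [hsplit]; ring
    rw [hEi]
    rw [show u x₀ + (∑ k ∈ Finset.Icc 1 r, iteratedDeriv k u x₀ * z i ^ k / k.factorial) + E i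
        - u x₀ = (∑ k ∈ Finset.Icc 1 r, iteratedDeriv k u x₀ * z i ^ k / k.factorial) + E i
        by ring]
    rw [add_div]
    congr 1
    rw [Finset.sum_div]
    apply Finset.sum_congr rfl
    intro k hk
    have hk1 : 1 ≤ k := (Finset.mem_Icc.mp hk).1
    rw [show (z i) ^ k = (z i) ^ (k - 1) * z i by
      conv_lhs => rw [show k = (k - 1) + 1 by omega]
      rw [pow_succ]]
    have hf : ((k.factorial : ℝ)) ≠ 0 := by positivity
    field_simp
  -- moment conditions kill all Taylor terms except the derivative
  have hmain : ∑ i, (u (x₀ + z i) - u x₀) / z i * a i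
      = deriv u x₀ + ∑ i, E i / z i * a i := by
    have hsplit2 : ∀ i, (u (x₀ + z i) - u x₀) / z i * a i
        = (∑ k ∈ Finset.Icc 1 r, iteratedDeriv k u x₀ * (z i) ^ (k - 1) / k.factorial * a i)
          + E i / z i * a i := by
      intro i; rw [hzsum i, add_mul, Finset.sum_mul]
    simp_rw [hsplit2, Finset.sum_add_distrib]
    congr 1
    rw [Finset.sum_comm]
    calc ∑ k ∈ Finset.Icc 1 r, ∑ i, iteratedDeriv k u x₀ * z i ^ (k - 1) / k.factorial * a i
          = ∑ k ∈ Finset.Icc 1 r, (iteratedDeriv k u x₀ / k.factorial)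
              * ∑ i, z i ^ (k - 1) * a i := by
            apply Finset.sum_congr rfl
            intro k _
            rw [Finset.mul_sum]
            apply Finset.sum_congr rfl
            intro i _
            ring
        _ = ∑ k ∈ Finset.Icc 1 r, (iteratedDeriv k u x₀ / k.factorial)
              * (if k = 1 then 1 else 0) := by
            apply Finset.sum_congr rfl
            intro k hk
            rw [ha k hk]
        _ = deriv u x₀ := by
            simp only [mul_ite, mul_one, mul_zero]
            rw [Finset.sum_ite_eq' (Finset.Icc 1 r) 1
              (fun k => iteratedDeriv k u x₀ / (k.factorial : ℝ))]
            simp [Finset.mem_Icc, hr, iteratedDeriv_one]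
  rw [hmain, add_sub_cancel_left]
  calc |∑ i, E i / z i * a i| ≤ ∑ i, |E i / z i * a i| := Finset.abs_sum_le_sum_abs _ _
    _ ≤ ∑ i, M * h ^ r / (r + 1).factorial * |a i| := by
        apply Finset.sum_le_sum
        intro i _
        rw [abs_mul, abs_div]
        apply mul_le_mul_of_nonneg_right _ (abs_nonneg _)
        have hzpos : 0 < |z i| := abs_pos.mpr (hz0 i)
        rw [div_le_iff₀ hzpos]
        calc |E i| ≤ M * |z i| ^ (r + 1) / (r + 1).factorial := hEbound i
          _ = M * |z i| ^ r * |z i| / (r + 1).factorial := by rw [pow_succ]; ring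
          _ ≤ M * h ^ r * |z i| / (r + 1).factorial := by
              have hM0 : 0 ≤ M := le_trans (abs_nonneg _)
                (hM x₀ (by constructor <;> linarith))
              have hp : |z i| ^ r ≤ h ^ r := pow_le_pow_left₀ (abs_nonneg _) (hzh i) r
              apply div_le_div_of_nonneg_right _ (by positivity)
              exact mul_le_mul_of_nonneg_right
                (mul_le_mul_of_nonneg_left hp hM0) (abs_nonneg _)
          _ = M * h ^ r / (r + 1).factorial * |z i| := by ring
    _ = M * h ^ r * (∑ i, |a i|) / (r + 1).factorial := by
        rw [← Finset.mul_sum, div_mul_eq_mul_div]
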